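/- arXiv:2411.00930 — 2 statements merged into one kernel-verified Lean document; each statement's English description precedes it below -/
import Mathlib

section
/- Let α ∈ ℝ and z₁, z₃, z₅, z₂, z₄ ∈ ℤ₊, r ∈ (0,1), and m₁,…,m₅ > 0 with m₁+m₃+m₅ = 1, m₂+m₄ = 1, M := m₁+m₃−m₅m₂/m₄ > 0, and service rates μ_k^{(r)} = 1/((1−r)m_k) for k ∈ {1,3,5} and μ_k^{(r)} = 1/((1−r²)m_k) for k ∈ {2,4}, with α₁ = 1. Then the drift quantity D := α₁ − (1/M)[μ₁^{(r)}m₁·1{z₁>0, z₃=z₅=0} + μ₃^{(r)}m₃·1{z₃>0, z₅=0} + μ₅^{(r)}m₅·1{z₅>0}] + (m₅/m₄)/M·[μ₂^{(r)}m₂·1{z₂>0} + μ₄^{(r)}m₄·1{z₄>0, z₂=0}] satisfies D ≤ −r/(1−r) + (1/(M(1−r)))·1{z₁ = z₃ = z₅ = 0}. -/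
private lemma stmt11_aux (r m₄ m₅ I₁ I₃ I₅ I₂ I₄ I0 : ℝ)
    (hr0 : 0 < r) (hr1 : r < 1) (h₄ : 0 < m₄) (h₅ : 0 < m₅) (h45 : m₅ < m₄)
    (hsum : I₁ + I₃ + I₅ = 1 - I0)
    (hB0 : 0 ≤ I₂ + I₄) (hB1 : I₂ + I₄ ≤ 1) :
    1 - (1 / ((m₄ - m₅) / m₄)) * (1 / (1 - r) * I₁ + 1 / (1 - r) * I₃ + 1 / (1 - r) * I₅)
      + ((m₅ / m₄) / ((m₄ - m₅) / m₄)) * (1 / (1 - r ^ 2) * I₂ + 1 / (1 - r ^ 2) * I₄)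
      ≤ -r / (1 - r) + (1 / (((m₄ - m₅) / m₄) * (1 - r))) * I0 := by
  have h1r : (0:ℝ) < 1 - r := by linarith
  have h1r2 : (0:ℝ) < 1 - r ^ 2 := by nlinarith
  have h45' : (0:ℝ) < m₄ - m₅ := by linarith
  have hI0 : I0 = 1 - (I₁ + I₃ + I₅) := by linarith
  subst hI0
  rw [← sub_nonneg]
  have key : -r / (1 - r) + (1 / (((m₄ - m₅) / m₄) * (1 - r))) * (1 - (I₁ + I₃ + I₅))
      - (1 - (1 / ((m₄ - m₅) / m₄)) * (1 / (1 - r) * I₁ + 1 / (1 - r) * I₃ + 1 / (1 - r) * I₅)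
        + ((m₅ / m₄) / ((m₄ - m₅) / m₄)) * (1 / (1 - r ^ 2) * I₂ + 1 / (1 - r ^ 2) * I₄))
      = (m₅ * (1 + r - (I₂ + I₄))) / ((m₄ - m₅) * (1 - r ^ 2)) := by
    have e2 : (1:ℝ) - r ^ 2 = (1 - r) * (1 + r) := by ring
    field_simp
    ring
  rw [key]
  apply div_nonneg
  · nlinarith [h₅.le]
  · positivity

/-- Negative-drift inequality for the class-1 workload Lyapunov function:
the drift quantity `D` is at most `−r/(1−r) + (1/(M(1−r)))·1{z₁=z₃=z₅=0}`. -/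
theorem stmt11 (z₁ z₂ z₃ z₄ z₅ : ℕ) (r m₁ m₂ m₃ m₄ m₅ : ℝ)
    (hr : r ∈ Set.Ioo (0 : ℝ) 1)
    (h₁ : 0 < m₁) (h₂ : 0 < m₂) (h₃ : 0 < m₃) (h₄ : 0 < m₄) (h₅ : 0 < m₅)
    (hs1 : m₁ + m₃ + m₅ = 1) (hs2 : m₂ + m₄ = 1)
    (hM : 0 < m₁ + m₃ - m₅ * (m₂ / m₄)) :
    let M := m₁ + m₃ - m₅ * (m₂ / m₄)
    let μ₁ := 1 / ((1 - r) * m₁)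
    let μ₃ := 1 / ((1 - r) * m₃)
    let μ₅ := 1 / ((1 - r) * m₅)
    let μ₂ := 1 / ((1 - r ^ 2) * m₂)
    let μ₄ := 1 / ((1 - r ^ 2) * m₄)
    let α₁ : ℝ := 1
    α₁ - (1 / M) * (μ₁ * m₁ * (if 0 < z₁ ∧ z₃ = 0 ∧ z₅ = 0 then (1 : ℝ) else 0)
        + μ₃ * m₃ * (if 0 < z₃ ∧ z₅ = 0 then (1 : ℝ) else 0)
        + μ₅ * m₅ * (if 0 < z₅ then (1 : ℝ) else 0))
      + ((m₅ / m₄) / M) * (μ₂ * m₂ * (if 0 < z₂ then (1 : ℝ) else 0)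
        + μ₄ * m₄ * (if 0 < z₄ ∧ z₂ = 0 then (1 : ℝ) else 0))
      ≤ -r / (1 - r)
        + (1 / (M * (1 - r))) * (if z₁ = 0 ∧ z₃ = 0 ∧ z₅ = 0 then (1 : ℝ) else 0) := by
  obtain ⟨hr0, hr1⟩ := hr
  intro M μ₁ μ₃ μ₅ μ₂ μ₄ α₁
  have h1r : (0:ℝ) < 1 - r := by linarith
  have h1r2 : (0:ℝ) < 1 - r ^ 2 := by nlinarith
  have hM0 : (0:ℝ) < M := hM
  have hMeq : M = (m₄ - m₅) / m₄ := by
    simp only [M]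
    field_simp
    nlinarith [hs1, hs2]
  have h45 : m₅ < m₄ := by
    have h' : 0 < (m₄ - m₅) / m₄ := hMeq ▸ hM0
    have h'' := mul_pos h' h₄
    rw [div_mul_cancel₀ _ h₄.ne'] at h''
    linarith
  have e1 : μ₁ * m₁ = 1 / (1 - r) := by
    simp only [μ₁]; field_simp
  have e3 : μ₃ * m₃ = 1 / (1 - r) := by
    simp only [μ₃]; field_simp
  have e5 : μ₅ * m₅ = 1 / (1 - r) := by
    simp only [μ₅]; field_simp
  have e2 : μ₂ * m₂ = 1 / (1 - r ^ 2) := by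
    simp only [μ₂]; field_simp
  have e4 : μ₄ * m₄ = 1 / (1 - r ^ 2) := by
    simp only [μ₄]; field_simp
  rw [show α₁ = (1:ℝ) from rfl, e1, e3, e5, e2, e4, hMeq]
  apply stmt11_aux r m₄ m₅ _ _ _ _ _ _ hr0 hr1 h₄ h₅ h45
  · rcases eq_or_ne z₁ 0 with hz1 | hz1 <;>
    rcases eq_or_ne z₃ 0 with hz3 | hz3 <;>
    rcases eq_or_ne z₅ 0 with hz5 | hz5 <;>
    simp [hz1, hz3, hz5, Nat.pos_iff_ne_zero]
  · apply add_nonneg <;> positivity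
  · rcases eq_or_ne z₂ 0 with hz2 | hz2 <;>
    rcases eq_or_ne z₄ 0 with hz4 | hz4 <;>
    simp [hz2, hz4, Nat.pos_iff_ne_zero]
end

section
/- Let m₁,…,m₅ > 0 with m₁+m₃+m₅ = 1, m₂+m₄ = 1, m₂+m₅ < 1, and M := m₁+m₃−m₅m₂/m₄. Then for r ∈ (0,1), with m_k^{(r)} = (1−r)m_k for k ∈ {1,3,5} and m_k^{(r)} = (1−r²)m_k for k ∈ {2,4}: 1 − (1 − m₅^{(r)}/m₄^{(r)})/(m₁^{(r)} + m₃^{(r)} − m₅^{(r)}m₂^{(r)}/m₄^{(r)}) ≤ −r/(1−r), i.e., α₁ − (1 − m₅^{(r)}/m₄^{(r)})/(m₁^{(r)}+m₃^{(r)}−m₅^{(r)}m₂^{(r)}/m₄^{(r)}) ≤ −r/(1−r) with α₁ = 1. -/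
/-!
Under the scaling, `m₂ / m₄` is unchanged while `m₅ / m₄` shrinks by the factor `1 + r`, so the
denominator is `(1 - r) M` and the numerator is at least `1 - m₅ / m₄`. The balance conditions
`m₁ + m₃ + m₅ = 1`, `m₂ + m₄ = 1` give `M = 1 - m₅ / m₄`, hence the quotient is at least
`1 / (1 - r)`, and `1 - 1 / (1 - r) = -r / (1 - r)`.
-/

lemma one_sub_mul_div_one_sub_sq_mul {r : ℝ} (hr : 1 - r ≠ 0) (a b : ℝ) :
    (1 - r) * a / ((1 - r ^ 2) * b) = a / ((1 + r) * b) := by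
  rw [show 1 - r ^ 2 = (1 - r) * (1 + r) by ring, mul_assoc, mul_div_mul_left _ _ hr]

lemma add_sub_mul_div_eq_one_sub_div {m₁ m₂ m₃ m₄ m₅ : ℝ}
    (hs1 : m₁ + m₃ + m₅ = 1) (hs2 : m₂ + m₄ = 1) (h₄ : m₄ ≠ 0) :
    m₁ + m₃ - m₅ * (m₂ / m₄) = 1 - m₅ / m₄ := by
  field_simp
  linear_combination m₄ * hs1 - m₅ * hs2

lemma one_sub_div_one_sub_mul_le {M N r : ℝ} (hM : 0 < M) (hMN : M ≤ N) (hr : r < 1) :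
    1 - N / ((1 - r) * M) ≤ -r / (1 - r) := by
  have hr' : 0 < 1 - r := sub_pos.mpr hr
  have : 1 / (1 - r) ≤ N / ((1 - r) * M) := by
    rw [div_le_div_iff₀ hr' (by positivity)]
    nlinarith
  calc 1 - N / ((1 - r) * M) ≤ 1 - 1 / (1 - r) := by linarith
    _ = -r / (1 - r) := by field_simp; ring

theorem stmt19_general (m₁ m₂ m₃ m₄ m₅ : ℝ)
    (h₄ : 0 < m₄) (h₅ : 0 < m₅)
    (hs1 : m₁ + m₃ + m₅ = 1) (hs2 : m₂ + m₄ = 1)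
    (hM : 0 < m₁ + m₃ - m₅ * (m₂ / m₄)) :
    ∀ r ∈ Set.Ioo (0 : ℝ) 1,
      let m₁r := (1 - r) * m₁
      let m₃r := (1 - r) * m₃
      let m₅r := (1 - r) * m₅
      let m₂r := (1 - r ^ 2) * m₂
      let m₄r := (1 - r ^ 2) * m₄
      (1 : ℝ) - (1 - m₅r / m₄r) / (m₁r + m₃r - m₅r * (m₂r / m₄r)) ≤ -r / (1 - r) := by
  rintro r ⟨hr0, hr1⟩
  dsimp only
  have hr : 1 - r ≠ 0 := by linarith
  have hr2 : 1 - r ^ 2 ≠ 0 := by nlinarith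
  rw [mul_div_mul_left _ _ hr2, one_sub_mul_div_one_sub_sq_mul hr,
    show (1 - r) * m₁ + (1 - r) * m₃ - (1 - r) * m₅ * (m₂ / m₄)
      = (1 - r) * (m₁ + m₃ - m₅ * (m₂ / m₄)) by ring]
  refine one_sub_div_one_sub_mul_le hM ?_ hr1
  rw [add_sub_mul_div_eq_one_sub_div hs1 hs2 h₄.ne']
  gcongr
  nlinarith

/-- Negative drift of order `r/(1−r)` under the multi-scale heavy traffic scaling:
with `m_k^{(r)} = (1−r)m_k` for `k ∈ {1,3,5}` and `m_k^{(r)} = (1−r²)m_k` for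
`k ∈ {2,4}`, `1 − (1 − m₅^{(r)}/m₄^{(r)})/(m₁^{(r)}+m₃^{(r)}−m₅^{(r)}m₂^{(r)}/m₄^{(r)}) ≤ −r/(1−r)`. -/
theorem stmt19 (m₁ m₂ m₃ m₄ m₅ : ℝ)
    (h₁ : 0 < m₁) (h₂ : 0 < m₂) (h₃ : 0 < m₃) (h₄ : 0 < m₄) (h₅ : 0 < m₅)
    (hs1 : m₁ + m₃ + m₅ = 1) (hs2 : m₂ + m₄ = 1) (hv : m₂ + m₅ < 1)
    (hM : 0 < m₁ + m₃ - m₅ * (m₂ / m₄)) :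
    ∀ r ∈ Set.Ioo (0 : ℝ) 1,
      let m₁r := (1 - r) * m₁
      let m₃r := (1 - r) * m₃
      let m₅r := (1 - r) * m₅
      let m₂r := (1 - r ^ 2) * m₂
      let m₄r := (1 - r ^ 2) * m₄
      (1 : ℝ) - (1 - m₅r / m₄r) / (m₁r + m₃r - m₅r * (m₂r / m₄r)) ≤ -r / (1 - r) :=
  stmt19_general m₁ m₂ m₃ m₄ m₅ h₄ h₅ hs1 hs2 hM
end
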